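/- arXiv:2405.03251 — 2 statements merged into one kernel-verified Lean document; each statement's English description precedes it below -/
import Mathlib

section
/- Let u, v ∈ ℝ^m with ‖u‖_∞ ≤ B and ‖v‖_∞ ≤ B. Then the softmax outputs satisfy ‖S(u) − S(v)‖₁ ≤ 2·exp(4B)·‖u − v‖_∞, where S(z)_r = exp(z_r)/∑_k exp(z_k). -/
private lemma exp_lip {B a b : ℝ} (ha : |a| ≤ B) (hb : |b| ≤ B) :
    |Real.exp a - Real.exp b| ≤ Real.exp B * |a - b| := by
  wlog h : b ≤ a generalizing a b
  · rw [abs_sub_comm, abs_sub_comm a b]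
    exact this hb ha (le_of_not_ge h)
  have hab : Real.exp b ≤ Real.exp a := Real.exp_le_exp.2 h
  rw [abs_of_nonneg (sub_nonneg.2 hab), abs_of_nonneg (sub_nonneg.2 h)]
  have h2 : Real.exp a * Real.exp (b - a) = Real.exp b := by
    rw [← Real.exp_add]; ring_nf
  have h3 := Real.add_one_le_exp (b - a)
  have haB : Real.exp a ≤ Real.exp B :=
    Real.exp_le_exp.2 ((le_abs_self a).trans ha)
  nlinarith [Real.exp_pos a]

/-- ℓ₁–ℓ∞ Lipschitz bound for the softmax map on the ∞-ball of radius `B`.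
Here the norm on `Fin m → ℝ` is the sup norm. -/
theorem softmax_l1_lipschitz (m : ℕ) (hm : 1 ≤ m) (B : ℝ) (hB : 0 < B)
    (u v : Fin m → ℝ) (hu : ‖u‖ ≤ B) (hv : ‖v‖ ≤ B) :
    ∑ r, |Real.exp (u r) / (∑ k, Real.exp (u k))
            - Real.exp (v r) / (∑ k, Real.exp (v k))|
      ≤ 2 * Real.exp (4 * B) * ‖u - v‖ := by
  have hne : Nonempty (Fin m) := Fin.pos_iff_nonempty.mp hm
  set A := ∑ k, Real.exp (u k) with hA
  set C := ∑ k, Real.exp (v k) with hC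
  have hAp : 0 < A := Finset.sum_pos (fun k _ => Real.exp_pos _) Finset.univ_nonempty
  have hCp : 0 < C := Finset.sum_pos (fun k _ => Real.exp_pos _) Finset.univ_nonempty
  set N := ‖u - v‖ with hN
  have hN0 : 0 ≤ N := norm_nonneg _
  set S := ∑ r, |Real.exp (u r) - Real.exp (v r)| with hS
  have hS0 : 0 ≤ S := Finset.sum_nonneg fun r _ => abs_nonneg _
  have hub : ∀ r : Fin m, |u r| ≤ B := fun r => (norm_le_pi_norm u r).trans hu
  have hvb : ∀ r : Fin m, |v r| ≤ B := fun r => (norm_le_pi_norm v r).trans hv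
  have huvN : ∀ r : Fin m, |u r - v r| ≤ N := fun r => norm_le_pi_norm (u - v) r
  -- pointwise bound
  have key : ∀ r : Fin m, |Real.exp (u r) / A - Real.exp (v r) / C|
      ≤ (Real.exp (u r) * |C - A| + |Real.exp (u r) - Real.exp (v r)| * A) / (A * C) := by
    intro r
    have heq : Real.exp (u r) / A - Real.exp (v r) / C
        = (Real.exp (u r) * (C - A) + (Real.exp (u r) - Real.exp (v r)) * A) / (A * C) := by
      field_simp; ring
    rw [heq, abs_div, abs_of_pos (mul_pos hAp hCp)]
    gcongr
    calc |Real.exp (u r) * (C - A) + (Real.exp (u r) - Real.exp (v r)) * A|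
        ≤ |Real.exp (u r) * (C - A)| + |(Real.exp (u r) - Real.exp (v r)) * A| := abs_add_le _ _
      _ = Real.exp (u r) * |C - A| + |Real.exp (u r) - Real.exp (v r)| * A := by
          rw [abs_mul, abs_mul, abs_of_pos (Real.exp_pos _), abs_of_pos hAp]
  have sum1 : ∑ r, |Real.exp (u r) / A - Real.exp (v r) / C|
      ≤ (A * |C - A| + S * A) / (A * C) := by
    calc ∑ r, |Real.exp (u r) / A - Real.exp (v r) / C|
        ≤ ∑ r : Fin m, (Real.exp (u r) * |C - A| + |Real.exp (u r) - Real.exp (v r)| * A) / (A * C) :=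
          Finset.sum_le_sum fun r _ => key r
      _ = (A * |C - A| + S * A) / (A * C) := by
          rw [← Finset.sum_div, Finset.sum_add_distrib, ← Finset.sum_mul, ← Finset.sum_mul]
      _ = (A * |C - A| + S * A) / (A * C) := rfl
  have hCA : |C - A| ≤ S := by
    rw [hC, hA, ← Finset.sum_sub_distrib]
    calc |∑ k, (Real.exp (v k) - Real.exp (u k))| ≤ ∑ k, |Real.exp (v k) - Real.exp (u k)| :=
          Finset.abs_sum_le_sum_abs _ _
      _ = S := by simp only [hS, abs_sub_comm]
  have step2 : (A * |C - A| + S * A) / (A * C) ≤ 2 * S / C := by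
    rw [div_le_div_iff₀ (mul_pos hAp hCp) hCp]
    have h1 : A * |C - A| ≤ A * S := by nlinarith
    nlinarith
  have hSle : S ≤ (m : ℝ) * (Real.exp B * N) := by
    calc S ≤ ∑ _r : Fin m, Real.exp B * N :=
          Finset.sum_le_sum fun r _ =>
            (exp_lip (hub r) (hvb r)).trans (by
              have := huvN r
              have := (Real.exp_pos B).le
              nlinarith)
      _ = (m : ℝ) * (Real.exp B * N) := by simp [mul_comm]
  have hCge : (m : ℝ) * Real.exp (-B) ≤ C := by
    calc (m : ℝ) * Real.exp (-B) = ∑ _k : Fin m, Real.exp (-B) := by simp [mul_comm]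
      _ ≤ C := Finset.sum_le_sum fun k _ => Real.exp_le_exp.2 (neg_le_of_abs_le (hvb k))
  have hm0 : (0:ℝ) < (m : ℝ) := by exact_mod_cast hm
  have step3 : 2 * S / C ≤ 2 * Real.exp (4 * B) * N := by
    have hme : 0 < (m : ℝ) * Real.exp (-B) := mul_pos hm0 (Real.exp_pos _)
    calc 2 * S / C ≤ 2 * ((m : ℝ) * (Real.exp B * N)) / ((m : ℝ) * Real.exp (-B)) := by
          gcongr
      _ = 2 * (Real.exp B / Real.exp (-B)) * N := by
          field_simp
      _ = 2 * Real.exp (2 * B) * N := by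
          rw [← Real.exp_sub]; ring_nf
      _ ≤ 2 * Real.exp (4 * B) * N := by
          have h24 : Real.exp (2 * B) ≤ Real.exp (4 * B) := Real.exp_le_exp.2 (by linarith)
          nlinarith
  calc ∑ r, |Real.exp (u r) / A - Real.exp (v r) / C| ≤ (A * |C - A| + S * A) / (A * C) := sum1
    _ ≤ 2 * S / C := step2
    _ ≤ 2 * Real.exp (4 * B) * N := step3
end

section
/- Let u, v ∈ ℝ^m with all entries bounded in absolute value by B, and let a ∈ {−1, +1}^m. If S denotes the softmax map, then |m·⟨a, S(u)⟩ − m·⟨a, S(v)⟩| ≤ 2m·exp(4B)·‖u − v‖_∞. -/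
lemma abs_one_sub_exp_le {t c : ℝ} (h : |t| ≤ c) :
    |1 - Real.exp t| ≤ Real.exp c - 1 := by
  have hc : 0 ≤ c := le_trans (abs_nonneg t) h
  rcases le_or_gt 0 t with ht | ht
  · have h1 : Real.exp t ≤ Real.exp c := Real.exp_le_exp.2 (le_trans (le_abs_self t) h)
    have h2 : 1 ≤ Real.exp t := Real.one_le_exp ht
    rw [abs_of_nonpos (by linarith)]
    linarith
  · have h1 : Real.exp (-t) ≤ Real.exp c := by
      apply Real.exp_le_exp.2
      calc -t ≤ |t| := neg_le_abs t
        _ ≤ c := h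
    have h2 : Real.exp t < 1 := Real.exp_lt_one_iff.2 ht
    have h3 : Real.exp t * Real.exp (-t) = 1 := by
      rw [← Real.exp_add]; simp
    have hp := Real.exp_pos t
    rw [abs_of_nonneg (by linarith)]
    nlinarith [sq_nonneg (Real.exp t - 1)]

/-- Lipschitz bound for one output coordinate `m·⟨a, S(·)⟩` of a two-layer
softmax network, with sign second-layer weights. The norm on `Fin m → ℝ` is
the sup norm. -/
theorem softmax_output_lipschitz (m : ℕ) (hm : 1 ≤ m) (B : ℝ) (hB : 0 < B)
    (u v : Fin m → ℝ) (hu : ∀ k, |u k| ≤ B) (hv : ∀ k, |v k| ≤ B)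
    (a : Fin m → ℝ) (ha : ∀ k, a k = 1 ∨ a k = -1) :
    |(m : ℝ) * ∑ r, a r * (Real.exp (u r) / ∑ k, Real.exp (u k))
        - (m : ℝ) * ∑ r, a r * (Real.exp (v r) / ∑ k, Real.exp (v k))|
      ≤ 2 * m * Real.exp (4 * B) * ‖u - v‖ := by
  set δ := ‖u - v‖ with hδdef
  have hδ0 : (0:ℝ) ≤ δ := norm_nonneg _
  have hδk : ∀ k, |u k - v k| ≤ δ := by
    intro k
    simpa using norm_le_pi_norm (u - v) k
  have hδ2B : δ ≤ 2 * B := by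
    have : ∀ k, ‖(u - v) k‖ ≤ 2 * B := by
      intro k
      simp only [Pi.sub_apply, Real.norm_eq_abs]
      calc |u k - v k| ≤ |u k| + |v k| := abs_sub _ _
        _ ≤ 2 * B := by linarith [hu k, hv k]
    exact (pi_norm_le_iff_of_nonneg (by positivity)).2 this
  set Eu := ∑ k, Real.exp (u k) with hEudef
  set Ev := ∑ k, Real.exp (v k) with hEvdef
  have hne : (Finset.univ : Finset (Fin m)).Nonempty := ⟨⟨0, hm⟩, Finset.mem_univ _⟩
  have hEu : 0 < Eu := Finset.sum_pos (fun k _ => Real.exp_pos _) hne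
  have hEv : 0 < Ev := Finset.sum_pos (fun k _ => Real.exp_pos _) hne
  -- per-coordinate bound
  have key : ∀ r, |Real.exp (u r) / Eu - Real.exp (v r) / Ev|
      ≤ (Real.exp (2 * δ) - 1) * (Real.exp (u r) / Eu) := by
    intro r
    have hnum : Real.exp (u r) * Ev - Real.exp (v r) * Eu
        = ∑ k, (Real.exp (u r) * Real.exp (v k) - Real.exp (v r) * Real.exp (u k)) := by
      rw [Finset.sum_sub_distrib, ← Finset.mul_sum, ← Finset.mul_sum]
    have hterm : ∀ k, |Real.exp (u r) * Real.exp (v k) - Real.exp (v r) * Real.exp (u k)|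
        ≤ (Real.exp (2 * δ) - 1) * (Real.exp (u r) * Real.exp (v k)) := by
      intro k
      have ht : |(v r - u r) + (u k - v k)| ≤ 2 * δ := by
        calc |(v r - u r) + (u k - v k)| ≤ |v r - u r| + |u k - v k| := abs_add_le _ _
          _ ≤ δ + δ := by
              have := hδk r; have := hδk k
              rw [abs_sub_comm (v r) (u r)]
              linarith
          _ = 2 * δ := by ring
      have hfac : Real.exp (v r) * Real.exp (u k)
          = Real.exp (u r) * Real.exp (v k) * Real.exp ((v r - u r) + (u k - v k)) := by
        rw [← Real.exp_add, ← Real.exp_add, ← Real.exp_add]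
        ring_nf
      rw [hfac]
      have : Real.exp (u r) * Real.exp (v k)
          - Real.exp (u r) * Real.exp (v k) * Real.exp ((v r - u r) + (u k - v k))
          = Real.exp (u r) * Real.exp (v k) * (1 - Real.exp ((v r - u r) + (u k - v k))) := by
        ring
      rw [this, abs_mul, abs_of_pos (by positivity)]
      have := abs_one_sub_exp_le ht
      have hpos : (0:ℝ) < Real.exp (u r) * Real.exp (v k) := by positivity
      nlinarith
    have hNbound : |Real.exp (u r) * Ev - Real.exp (v r) * Eu|
        ≤ (Real.exp (2 * δ) - 1) * (Real.exp (u r) * Ev) := by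
      rw [hnum]
      calc |∑ k, (Real.exp (u r) * Real.exp (v k) - Real.exp (v r) * Real.exp (u k))|
          ≤ ∑ k, |Real.exp (u r) * Real.exp (v k) - Real.exp (v r) * Real.exp (u k)| :=
            Finset.abs_sum_le_sum_abs _ _
        _ ≤ ∑ k, (Real.exp (2 * δ) - 1) * (Real.exp (u r) * Real.exp (v k)) :=
            Finset.sum_le_sum (fun k _ => hterm k)
        _ = (Real.exp (2 * δ) - 1) * (Real.exp (u r) * Ev) := by
            rw [← Finset.mul_sum, ← Finset.mul_sum]
    have hdiff : Real.exp (u r) / Eu - Real.exp (v r) / Ev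
        = (Real.exp (u r) * Ev - Real.exp (v r) * Eu) / (Eu * Ev) := by
      field_simp
    rw [hdiff, abs_div, abs_of_pos (mul_pos hEu hEv)]
    rw [div_le_iff₀ (mul_pos hEu hEv)]
    calc |Real.exp (u r) * Ev - Real.exp (v r) * Eu|
        ≤ (Real.exp (2 * δ) - 1) * (Real.exp (u r) * Ev) := hNbound
      _ = (Real.exp (2 * δ) - 1) * (Real.exp (u r) / Eu) * (Eu * Ev) := by
          field_simp
  -- sum bound
  have hsum : ∑ r, |Real.exp (u r) / Eu - Real.exp (v r) / Ev|
      ≤ Real.exp (2 * δ) - 1 := by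
    calc ∑ r, |Real.exp (u r) / Eu - Real.exp (v r) / Ev|
        ≤ ∑ r, (Real.exp (2 * δ) - 1) * (Real.exp (u r) / Eu) :=
          Finset.sum_le_sum (fun r _ => key r)
      _ = (Real.exp (2 * δ) - 1) * (∑ r, Real.exp (u r) / Eu) := by
          rw [← Finset.mul_sum]
      _ = Real.exp (2 * δ) - 1 := by
          rw [← Finset.sum_div, div_self (ne_of_gt hEu), mul_one]
  -- combine
  have habs : |∑ r, a r * (Real.exp (u r) / Eu) - ∑ r, a r * (Real.exp (v r) / Ev)|
      ≤ Real.exp (2 * δ) - 1 := by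
    calc |∑ r, a r * (Real.exp (u r) / Eu) - ∑ r, a r * (Real.exp (v r) / Ev)|
        = |∑ r, a r * (Real.exp (u r) / Eu - Real.exp (v r) / Ev)| := by
          rw [← Finset.sum_sub_distrib]; congr 1; apply Finset.sum_congr rfl
          intro r _; ring
      _ ≤ ∑ r, |a r * (Real.exp (u r) / Eu - Real.exp (v r) / Ev)| :=
          Finset.abs_sum_le_sum_abs _ _
      _ = ∑ r, |Real.exp (u r) / Eu - Real.exp (v r) / Ev| := by
          apply Finset.sum_congr rfl; intro r _
          rw [abs_mul]
          rcases ha r with h | h <;> simp [h]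
      _ ≤ Real.exp (2 * δ) - 1 := hsum
  have hexp : Real.exp (2 * δ) - 1 ≤ 2 * Real.exp (4 * B) * δ := by
    have h1 : 1 - 2 * δ ≤ Real.exp (-(2 * δ)) := by
      linarith [Real.add_one_le_exp (-(2 * δ))]
    have h2 : Real.exp (2 * δ) * Real.exp (-(2 * δ)) = 1 := by
      rw [← Real.exp_add]; simp
    have h3 : Real.exp (2 * δ) ≤ Real.exp (4 * B) :=
      Real.exp_le_exp.2 (by linarith)
    have hp := Real.exp_pos (2 * δ)
    nlinarith
  have hm0 : (0:ℝ) ≤ (m:ℝ) := Nat.cast_nonneg m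
  calc |(m : ℝ) * ∑ r, a r * (Real.exp (u r) / Eu)
        - (m : ℝ) * ∑ r, a r * (Real.exp (v r) / Ev)|
      = (m:ℝ) * |∑ r, a r * (Real.exp (u r) / Eu) - ∑ r, a r * (Real.exp (v r) / Ev)| := by
        rw [← mul_sub, abs_mul, abs_of_nonneg hm0]
    _ ≤ (m:ℝ) * (2 * Real.exp (4 * B) * δ) := by
        have := le_trans habs hexp
        exact mul_le_mul_of_nonneg_left this hm0
    _ = 2 * m * Real.exp (4 * B) * δ := by ring
end
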